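/- arXiv:1109.2212 — 2 statements merged into one kernel-verified Lean document; each statement's English description precedes it below -/
import Mathlib

section
/- If a = {a_n} ∈ ℓ²(ℤ₊) has z-transform A(z) = Σ a_n zⁿ and b = {b_n} ∈ ℓ²(ℤ₊) has z-transform B(z) with B(z) = I(z)A(z) for all z ∈ 𝔻, where I is analytic on 𝔻 with |I(z)| ≤ 1, then Σ_{n=0}^N |b_n|² ≤ Σ_{n=0}^N |a_n|² for every N ≥ 0. -/
/-! Fix `r < 1` and let `Q(z) = ∑_{n ≤ N} a n zⁿ`. Since `I` is holomorphic, `θ ↦ I(r e^{iθ})` has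
no negative Fourier coefficients, so the Fourier coefficients of degree `≤ N` of `Q·I` on the circle
`|z| = r` are those of `A·I = B`, namely `b n rⁿ`. Bessel's inequality for `Q·I`, the pointwise
bound `|Q·I| ≤ |Q|` and Parseval's identity for the trigonometric polynomial `Q` give
`∑_{n ≤ N} |b n|² r²ⁿ ≤ ∑_{n ≤ N} |a n|² r²ⁿ`; then let `r → 1`. -/

open Finset MeasureTheory AddCircle Metric
open scoped NNReal ENNReal

theorem Memℓp.summable_norm_mul_pow {E : Type*} [NormedAddCommGroup E] {c : ℕ → E}
    {p : ℝ≥0∞} (hc : Memℓp c p) {r : ℝ} (hr0 : 0 ≤ r) (hr1 : r < 1) :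
    Summable fun m => ‖c m‖ * r ^ m := by
  obtain ⟨C, hC⟩ := memℓp_infty_iff.1 (hc.of_exponent_ge le_top)
  refine .of_nonneg_of_le (fun m => by positivity) (fun m => ?_)
    ((summable_geometric_of_lt_one hr0 hr1).mul_left C)
  exact mul_le_mul_of_nonneg_right (hC ⟨m, rfl⟩) (pow_nonneg hr0 m)

theorem sum_sq_norm_le_of_forall_mul_pow {s : Finset ℕ} {a b : ℕ → ℂ}
    (h : ∀ r : ℝ, 0 ≤ r → r < 1 →
      ∑ n ∈ s, ‖b n * (r : ℂ) ^ n‖ ^ 2 ≤ ∑ n ∈ s, ‖a n * (r : ℂ) ^ n‖ ^ 2) :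
    ∑ n ∈ s, ‖b n‖ ^ 2 ≤ ∑ n ∈ s, ‖a n‖ ^ 2 := by
  have hclosed : IsClosed {r : ℝ |
      ∑ n ∈ s, ‖b n * (r : ℂ) ^ n‖ ^ 2 ≤ ∑ n ∈ s, ‖a n * (r : ℂ) ^ n‖ ^ 2} :=
    isClosed_le (by fun_prop) (by fun_prop)
  have h1 : (1 : ℝ) ∈ closure (Set.Ico 0 1) := by
    rw [closure_Ico zero_ne_one]; exact ⟨zero_le_one, le_rfl⟩
  simpa using hclosed.closure_subset_iff.2 (fun r hr => h r hr.1 hr.2) h1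

section Circle

variable {T : ℝ}

noncomputable def circlePoint (r : ℝ) (x : AddCircle T) : ℂ := r * toCircle x

theorem continuous_circlePoint (r : ℝ) : Continuous (circlePoint (T := T) r) := by
  unfold circlePoint; fun_prop

theorem norm_circlePoint {r : ℝ} (hr : 0 ≤ r) (x : AddCircle T) : ‖circlePoint r x‖ = r := by
  simp [circlePoint, abs_of_nonneg hr, Circle.norm_coe]

theorem circlePoint_mem_sphere {r : ℝ} (hr : 0 ≤ r) (x : AddCircle T) :
    circlePoint r x ∈ sphere (0 : ℂ) r := by
  simp [norm_circlePoint hr]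

theorem circlePoint_pow (r : ℝ) (m : ℕ) (x : AddCircle T) :
    circlePoint r x ^ m = (r : ℂ) ^ m * fourier m x := by
  rw [circlePoint, mul_pow, fourier_apply, toCircle_zsmul, zpow_natCast, Circle.coe_pow]

theorem continuous_tsum_mul_circlePoint_pow {g : ℕ → ℂ} {r : ℝ} (hr : 0 ≤ r)
    (hg : Summable fun m => ‖g m‖ * r ^ m) :
    Continuous fun x : AddCircle T => ∑' m, g m * circlePoint r x ^ m :=
  continuous_tsum (fun m => by have := continuous_circlePoint (T := T) r; fun_prop) hg
    fun m x => by rw [norm_mul, norm_pow, norm_circlePoint hr]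

theorem continuous_comp_circlePoint {F : ℂ → ℂ} {R r : ℝ} (hF : DifferentiableOn ℂ F (ball 0 R))
    (hr : 0 ≤ r) (hrR : r < R) : Continuous fun x : AddCircle T => F (circlePoint r x) :=
  hF.continuousOn.comp_continuous (continuous_circlePoint r)
    fun x => sphere_subset_ball hrR (circlePoint_mem_sphere hr x)

variable [Fact (0 < T)]

theorem hasSum_sq_fourierCoeff_of_continuous (f : C(AddCircle T, ℂ)) :
    HasSum (fun i => ‖fourierCoeff f i‖ ^ 2) (∫ x, ‖f x‖ ^ 2 ∂haarAddCircle) := by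
  have h := hasSum_sq_fourierCoeff (ContinuousMap.toLp (E := ℂ) 2 haarAddCircle ℂ f)
  simp only [fourierCoeff_toLp] at h
  convert h using 1
  refine integral_congr_ae ?_
  filter_upwards [ContinuousMap.coeFn_toLp (p := 2) (𝕜 := ℂ) haarAddCircle f] with x hx
  rw [hx]

theorem sum_sq_fourierCoeff_le_of_norm_le {f g : C(AddCircle T, ℂ)} (hfg : ∀ x, ‖f x‖ ≤ ‖g x‖)
    (s : Finset ℤ) (hg : ∀ i ∉ s, fourierCoeff g i = 0) :
    ∑ i ∈ s, ‖fourierCoeff f i‖ ^ 2 ≤ ∑ i ∈ s, ‖fourierCoeff g i‖ ^ 2 := by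
  have hint : ∀ h : C(AddCircle T, ℂ), Integrable (fun x => ‖h x‖ ^ 2) haarAddCircle :=
    fun h => (by fun_prop : Continuous fun x => ‖h x‖ ^ 2).integrable_of_hasCompactSupport
      (.of_compactSpace _)
  calc ∑ i ∈ s, ‖fourierCoeff f i‖ ^ 2
      ≤ ∫ x, ‖f x‖ ^ 2 ∂haarAddCircle :=
        sum_le_hasSum s (fun _ _ => by positivity) (hasSum_sq_fourierCoeff_of_continuous f)
    _ ≤ ∫ x, ‖g x‖ ^ 2 ∂haarAddCircle :=
        integral_mono (hint f) (hint g) fun x => by gcongr; exact hfg x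
    _ = ∑ i ∈ s, ‖fourierCoeff g i‖ ^ 2 :=
        (hasSum_sq_fourierCoeff_of_continuous g).unique
          (hasSum_sum_of_ne_finset_zero fun i hi => by simp [hg i hi])

theorem fourierCoeff_tsum_mul {g : ℕ → ℂ} {r : ℝ} (hr : 0 ≤ r)
    (hg : Summable fun m => ‖g m‖ * r ^ m) {G : AddCircle T → ℂ} (hG : Continuous G) (k : ℤ) :
    fourierCoeff (fun x => (∑' m, g m * circlePoint r x ^ m) * G x) k =
      ∑' m, g m * r ^ m * fourierCoeff G (k - m) := by
  set F : ℕ → AddCircle T → ℂ := fun m x => fourier (-k) x • (g m * circlePoint r x ^ m * G x)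
  have hF : ∀ m x, F m x = g m * r ^ m * (fourier (-(k - m)) x • G x) := by
    intro m x
    simp only [F, smul_eq_mul]
    rw [circlePoint_pow, show -(k - m) = (m : ℤ) + -k by ring, fourier_add]
    ring
  have hint : ∀ m, Integrable (F m) haarAddCircle := fun m =>
    (by have := continuous_circlePoint (T := T) r; fun_prop : Continuous (F m))
      |>.integrable_of_hasCompactSupport (.of_compactSpace _)
  have hnorm : ∀ m, ∫ x, ‖F m x‖ ∂haarAddCircle = ‖g m‖ * r ^ m * ∫ x, ‖G x‖ ∂haarAddCircle := by
    intro m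
    simp only [hF, norm_mul, norm_smul, norm_pow, Complex.norm_real, Real.norm_of_nonneg hr,
      fourier_apply, Circle.norm_coe, one_mul, integral_const_mul]
  calc fourierCoeff (fun x => (∑' m, g m * circlePoint r x ^ m) * G x) k
      = ∫ x, ∑' m, F m x ∂haarAddCircle := by
        simp only [fourierCoeff, F, smul_eq_mul, ← tsum_mul_right, ← tsum_mul_left]
    _ = ∑' m, ∫ x, F m x ∂haarAddCircle :=
        (integral_tsum_of_summable_integral_norm hint
          (by simpa only [hnorm] using hg.mul_right _)).symm
    _ = ∑' m, g m * r ^ m * fourierCoeff G (k - m) := by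
        simp only [hF, integral_const_mul, fourierCoeff]

theorem fourierCoeff_tsum_mul_circlePoint_pow_natCast {g : ℕ → ℂ} {r : ℝ} (hr : 0 ≤ r)
    (hg : Summable fun m => ‖g m‖ * r ^ m) (n : ℕ) :
    fourierCoeff (fun x : AddCircle T => ∑' m, g m * circlePoint r x ^ m) n = g n * r ^ n := by
  have h := fourierCoeff_tsum_mul hr hg (fourier (T := T) 0).continuous n
  simp only [fourier_zero, mul_one, fourierCoeff_fourier] at h
  rw [h, tsum_eq_single n fun m hm => by simp [sub_eq_zero, Ne.symm hm]]
  simp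

theorem fourierCoeff_tsum_mul_circlePoint_pow_of_neg {g : ℕ → ℂ} {r : ℝ} (hr : 0 ≤ r)
    (hg : Summable fun m => ‖g m‖ * r ^ m) {k : ℤ} (hk : k < 0) :
    fourierCoeff (fun x : AddCircle T => ∑' m, g m * circlePoint r x ^ m) k = 0 := by
  have h := fourierCoeff_tsum_mul hr hg (fourier (T := T) 0).continuous k
  simp only [fourier_zero, mul_one, fourierCoeff_fourier] at h
  have hkm : ∀ m : ℕ, k - m ≠ 0 := fun m => by omega
  simp [h, hkm]

theorem fourierCoeff_comp_circlePoint_of_neg {F : ℂ → ℂ} {R r : ℝ}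
    (hF : DifferentiableOn ℂ F (ball 0 R)) (hr : 0 ≤ r) (hrR : r < R) {k : ℤ} (hk : k < 0) :
    fourierCoeff (fun x : AddCircle T => F (circlePoint r x)) k = 0 := by
  obtain ⟨ρ, hrρ, hρR⟩ := exists_between hrR
  lift ρ to ℝ≥0 using hr.trans hrρ.le
  have hF_series := (hF.mono (closedBall_subset_ball hρR)).hasFPowerSeriesOnBall
    (show 0 < ρ from mod_cast hr.trans_lt hrρ)
  set p := cauchyPowerSeries F 0 ρ
  have hp : Summable fun m => ‖p.coeff m‖ * r ^ m := by
    have hr_lt : (r.toNNReal : ℝ≥0∞) < p.radius :=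
      lt_of_lt_of_le (by exact_mod_cast (Real.toNNReal_lt_iff_lt_coe hr).2 hrρ) hF_series.r_le
    simpa [FormalMultilinearSeries.norm_apply_eq_norm_coef, Real.coe_toNNReal r hr]
      using p.summable_norm_mul_pow hr_lt
  have hF_eq : ∀ x : AddCircle T, F (circlePoint r x) = ∑' m, p.coeff m * circlePoint r x ^ m := by
    intro x
    have hx : circlePoint r x ∈ eball (0 : ℂ) ρ := by
      rw [mem_eball_zero_iff, enorm_eq_nnnorm, ENNReal.coe_lt_coe, ← NNReal.coe_lt_coe,
        coe_nnnorm, norm_circlePoint hr]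
      exact hrρ
    simpa [mul_comm] using (hF_series.hasSum hx).tsum_eq.symm
  simpa only [hF_eq] using fourierCoeff_tsum_mul_circlePoint_pow_of_neg hr hp hk

theorem fourierCoeff_tsum_mul_comp_circlePoint_congr {g g' : ℕ → ℂ} {F : ℂ → ℂ} {R r : ℝ}
    (hF : DifferentiableOn ℂ F (ball 0 R)) (hr : 0 ≤ r) (hrR : r < R)
    (hg : Summable fun m => ‖g m‖ * r ^ m) (hg' : Summable fun m => ‖g' m‖ * r ^ m)
    {n : ℕ} (hgg' : ∀ m ≤ n, g m = g' m) :
    fourierCoeff (fun x : AddCircle T =>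
        (∑' m, g m * circlePoint r x ^ m) * F (circlePoint r x)) n =
      fourierCoeff (fun x : AddCircle T =>
        (∑' m, g' m * circlePoint r x ^ m) * F (circlePoint r x)) n := by
  have hFc := continuous_comp_circlePoint (T := T) hF hr hrR
  rw [fourierCoeff_tsum_mul hr hg hFc, fourierCoeff_tsum_mul hr hg' hFc]
  refine tsum_congr fun m => ?_
  rcases le_or_gt m n with hmn | hnm
  · rw [hgg' m hmn]
  · rw [fourierCoeff_comp_circlePoint_of_neg hF hr hrR (by omega), mul_zero, mul_zero]

end Circle

theorem sum_sq_norm_mul_pow_le_of_eq_mul {a b : ℕ → ℂ} {I : ℂ → ℂ} {R r : ℝ}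
    (hr : 0 ≤ r) (hrR : r < R)
    (ha : Summable fun m => ‖a m‖ * r ^ m) (hb : Summable fun m => ‖b m‖ * r ^ m)
    (hI : DifferentiableOn ℂ I (ball 0 R)) (hI1 : ∀ z ∈ sphere (0 : ℂ) r, ‖I z‖ ≤ 1)
    (hBA : ∀ z ∈ sphere (0 : ℂ) r, ∑' n, b n * z ^ n = I z * ∑' n, a n * z ^ n) (N : ℕ) :
    ∑ n ∈ range (N + 1), ‖b n * (r : ℂ) ^ n‖ ^ 2 ≤
      ∑ n ∈ range (N + 1), ‖a n * (r : ℂ) ^ n‖ ^ 2 := by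
  have : Fact ((0 : ℝ) < 1) := ⟨one_pos⟩
  set q : ℕ → ℂ := fun m => if m ≤ N then a m else 0
  have hq : Summable fun m => ‖q m‖ * r ^ m :=
    ha.of_nonneg_of_le (fun m => by positivity) fun m => by
      gcongr; simp only [q]; split_ifs <;> simp
  let Q : C(AddCircle (1 : ℝ), ℂ) := ⟨_, continuous_tsum_mul_circlePoint_pow hr hq⟩
  let f : C(AddCircle (1 : ℝ), ℂ) :=
    ⟨fun x => Q x * I (circlePoint r x), Q.continuous.mul (continuous_comp_circlePoint hI hr hrR)⟩
  have hfQ : ∀ x, ‖f x‖ ≤ ‖Q x‖ := fun x => by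
    simpa [f, norm_mul] using mul_le_mul_of_nonneg_left
      (hI1 _ (circlePoint_mem_sphere hr x)) (norm_nonneg (Q x))
  have hQ : ∀ n ∈ range (N + 1), fourierCoeff Q n = a n * r ^ n := fun n hn =>
    (fourierCoeff_tsum_mul_circlePoint_pow_natCast hr hq n).trans
      (by rw [show q n = a n from if_pos (by simpa [Nat.lt_succ_iff] using hn)])
  have hf : ∀ n ∈ range (N + 1), fourierCoeff f n = b n * r ^ n := fun n hn => by
    calc fourierCoeff f n
        = fourierCoeff (fun x : AddCircle (1 : ℝ) =>
            (∑' m, a m * circlePoint r x ^ m) * I (circlePoint r x)) n :=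
          fourierCoeff_tsum_mul_comp_circlePoint_congr hI hr hrR hq ha
            fun m hm => if_pos (hm.trans (by simpa [Nat.lt_succ_iff] using hn))
      _ = fourierCoeff (fun x : AddCircle (1 : ℝ) => ∑' m, b m * circlePoint r x ^ m) n := by
          congr 1; funext x; rw [hBA _ (circlePoint_mem_sphere hr x), mul_comm]
      _ = b n * r ^ n := fourierCoeff_tsum_mul_circlePoint_pow_natCast hr hb n
  have hQ_supp : ∀ i ∉ (range (N + 1)).map Nat.castEmbedding, fourierCoeff Q i = 0 := by
    intro i hi
    rcases lt_or_ge i 0 with hneg | hnonneg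
    · exact fourierCoeff_tsum_mul_circlePoint_pow_of_neg hr hq hneg
    · lift i to ℕ using hnonneg
      have hiN : ¬ i ≤ N := by simpa [Nat.lt_succ_iff] using hi
      exact (fourierCoeff_tsum_mul_circlePoint_pow_natCast hr hq i).trans
        (by rw [show q i = 0 from if_neg hiN, zero_mul])
  calc ∑ n ∈ range (N + 1), ‖b n * (r : ℂ) ^ n‖ ^ 2
      = ∑ n ∈ range (N + 1), ‖fourierCoeff f n‖ ^ 2 := sum_congr rfl fun n hn => by rw [hf n hn]
    _ ≤ ∑ n ∈ range (N + 1), ‖fourierCoeff Q n‖ ^ 2 := by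
        simpa [sum_map] using sum_sq_fourierCoeff_le_of_norm_le hfQ _ hQ_supp
    _ = ∑ n ∈ range (N + 1), ‖a n * (r : ℂ) ^ n‖ ^ 2 := sum_congr rfl fun n hn => by rw [hQ n hn]


theorem partial_energy_inequality (a b : ℕ → ℂ)
    (ha : Memℓp a 2) (hb : Memℓp b 2)
    (I : ℂ → ℂ) (hI : DifferentiableOn ℂ I (Metric.ball (0 : ℂ) 1))
    (hI1 : ∀ z ∈ Metric.ball (0 : ℂ) 1, ‖I z‖ ≤ 1)
    (hBA : ∀ z ∈ Metric.ball (0 : ℂ) 1,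
      (∑' n : ℕ, b n * z ^ n) = I z * ∑' n : ℕ, a n * z ^ n) :
    ∀ N : ℕ, ∑ n ∈ range (N + 1), ‖b n‖ ^ 2 ≤
      ∑ n ∈ range (N + 1), ‖a n‖ ^ 2 := by
  intro N
  refine sum_sq_norm_le_of_forall_mul_pow fun r hr0 hr1 => ?_
  have hsphere : sphere (0 : ℂ) r ⊆ ball 0 1 := sphere_subset_ball hr1
  exact sum_sq_norm_mul_pow_le_of_eq_mul hr0 hr1 (ha.summable_norm_mul_pow hr0 hr1)
    (hb.summable_norm_mul_pow hr0 hr1) hI (fun z hz => hI1 z (hsphere hz))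
    (fun z hz => hBA z (hsphere hz)) N
end

section
/- For each n ≥ 0, the Laplace transform of the function t ↦ (−1)ⁿ √2 e^{−t} L_n(2t), where L_n is the nth Laguerre polynomial, evaluated at w in the right half plane and multiplied by 2√π/(1+z) under the substitution w = (1−z)/(1+z), equals zⁿ; equivalently ℋ((−1)ⁿ √2 e^{−t} L_n(2t))(z) = zⁿ for all z ∈ 𝔻. -/
/-!
By the Leibniz rule, Rodrigues' formula gives `L_n(t) = ∑ₖ C(n,k) (-t)ᵏ / k!`. Since
`∫₀^∞ tᵏ e^{-st} dt = k! / s^{k+1}` for `Re s > 0`, the binomial theorem yields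
`∫₀^∞ L_n(ct) e^{-st} dt = (s - c)ⁿ / s^{n+1}`. For `|z| < 1` the kernel of `ℋ` combines with
`e^{-t}` into `e^{-st}` with `s = 2 / (1 + z)`, which has positive real part, and
`(s - 2)ⁿ / s^{n+1} = (-z)ⁿ (1 + z) / 2`.
-/

open MeasureTheory Set

noncomputable def laguerre (n : ℕ) (t : ℝ) : ℝ :=
  Real.exp t / n.factorial * iteratedDeriv n (fun s => s ^ n * Real.exp (-s)) t

noncomputable def Hmap (f : ℝ → ℂ) (z : ℂ) : ℂ :=
  (Real.sqrt 2 / (1 + z)) * ∫ t in Ioi (0 : ℝ), f t * Complex.exp (t * (z - 1) / (z + 1))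

open Finset Complex

theorem iteratedDeriv_pow_mul_exp_neg (n : ℕ) (t : ℝ) :
    iteratedDeriv n (fun s => s ^ n * Real.exp (-s)) t =
      ∑ k ∈ range (n + 1), n.choose k * (n.factorial / k.factorial : ℝ) * (-t) ^ k *
        Real.exp (-t) := by
  have hexp : (fun s : ℝ => Real.exp (-s)) = fun s => Real.exp (-1 * s) := by
    simp only [neg_one_mul]
  rw [iteratedDeriv_fun_mul (contDiff_id.pow n).contDiffAt (by fun_prop), hexp]
  simp only [iteratedDeriv_exp_const_mul]
  rw [← sum_range_reflect]
  refine sum_congr rfl fun k hk => ?_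
  rw [Finset.mem_range, Nat.lt_succ_iff] at hk
  have hdesc : (n.descFactorial (n - k) : ℝ) = n.factorial / k.factorial := by
    have := Nat.factorial_mul_descFactorial (Nat.sub_le n k)
    rw [Nat.sub_sub_self hk] at this
    rw [eq_div_iff (by positivity), mul_comm, ← Nat.cast_mul, this]
  simp only [iteratedDeriv_pow, add_tsub_cancel_right, Nat.sub_sub_self hk, Nat.choose_symm hk,
    hdesc, neg_pow t, neg_one_mul]
  ring

theorem laguerre_eq_sum (n : ℕ) (t : ℝ) :
    laguerre n t = ∑ k ∈ range (n + 1), n.choose k * (-t) ^ k / k.factorial := by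
  rw [laguerre, iteratedDeriv_pow_mul_exp_neg, mul_sum]
  refine sum_congr rfl fun k _ => ?_
  have : Real.exp t * Real.exp (-t) = 1 := by rw [← Real.exp_add, add_neg_cancel, Real.exp_zero]
  field_simp
  linear_combination (n.choose k * (-t) ^ k) * this

section LaplaceMonomial

variable {a : ℂ}

theorem norm_ofReal_pow_mul_cexp_neg_mul (a : ℂ) (k : ℕ) {t : ℝ} (ht : 0 ≤ t) :
    ‖(t : ℂ) ^ k * cexp (-(a * t))‖ = t ^ k * Real.exp (-a.re * t) := by
  rw [norm_mul, norm_pow, norm_real, Real.norm_of_nonneg ht, norm_exp]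
  simp

theorem integrableOn_pow_mul_cexp_neg_mul (ha : 0 < a.re) (k : ℕ) :
    IntegrableOn (fun t : ℝ => (t : ℂ) ^ k * cexp (-(a * t))) (Ioi 0) := by
  have hreal : IntegrableOn (fun t : ℝ => t ^ (k : ℝ) * Real.exp (-a.re * t ^ (1 : ℝ))) (Ioi 0) :=
    integrableOn_rpow_mul_exp_neg_mul_rpow (by linarith [(k.cast_nonneg : (0 : ℝ) ≤ k)])
      one_pos ha
  refine hreal.mono' (by fun_prop) ?_
  filter_upwards [ae_restrict_mem measurableSet_Ioi] with t ht
  rw [norm_ofReal_pow_mul_cexp_neg_mul a k (le_of_lt ht), Real.rpow_natCast, Real.rpow_one]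

theorem hasDerivAt_pow_mul_cexp_neg_mul (a : ℂ) (k : ℕ) (x : ℝ) :
    HasDerivAt (fun t : ℝ => (t : ℂ) ^ k * cexp (-(a * t)))
      (k * ((x : ℂ) ^ (k - 1) * cexp (-(a * x))) - a * ((x : ℂ) ^ k * cexp (-(a * x)))) x := by
  have hpow : HasDerivAt (fun t : ℝ => (t : ℂ) ^ k) (k * (x : ℂ) ^ (k - 1)) x :=
    (hasDerivAt_pow k (x : ℂ)).comp_ofReal
  have hexp : HasDerivAt (fun t : ℝ => cexp (-(a * t))) (cexp (-(a * x)) * -(a * 1)) x :=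
    ((hasDerivAt_id x).ofReal_comp.const_mul a).fun_neg.cexp
  exact (hpow.fun_mul hexp).congr_deriv (by ring)

theorem mul_integral_pow_mul_cexp_neg_mul_Ioi (ha : 0 < a.re) (k : ℕ) :
    a * ∫ t in Ioi (0 : ℝ), (t : ℂ) ^ k * cexp (-(a * t)) =
      k * (∫ t in Ioi (0 : ℝ), (t : ℂ) ^ (k - 1) * cexp (-(a * t))) + 0 ^ k := by
  have hint₁ := (integrableOn_pow_mul_cexp_neg_mul ha (k - 1)).const_mul (k : ℂ)
  have hint₂ := (integrableOn_pow_mul_cexp_neg_mul ha k).const_mul a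
  have hderiv := fun x (_ : x ∈ Ioi (0 : ℝ)) => hasDerivAt_pow_mul_cexp_neg_mul a k x
  -- The boundary term at `∞` vanishes because the function and its derivative are integrable.
  have hftc := integral_Ioi_of_hasDerivAt_of_tendsto (by fun_prop) hderiv (hint₁.sub hint₂)
    (tendsto_zero_of_hasDerivAt_of_integrableOn_Ioi hderiv (hint₁.sub hint₂)
      (integrableOn_pow_mul_cexp_neg_mul ha k))
  rw [integral_sub hint₁ hint₂, integral_const_mul, integral_const_mul] at hftc
  simp only [ofReal_zero, mul_zero, neg_zero, exp_zero, mul_one, zero_sub] at hftc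
  linear_combination -hftc

theorem integral_pow_mul_cexp_neg_mul_Ioi (ha : 0 < a.re) (k : ℕ) :
    ∫ t in Ioi (0 : ℝ), (t : ℂ) ^ k * cexp (-(a * t)) = k.factorial / a ^ (k + 1) := by
  have ha0 : a ≠ 0 := fun h => by simp [h] at ha
  rw [eq_div_iff (pow_ne_zero _ ha0)]
  induction k with
  | zero => simpa [mul_comm] using mul_integral_pow_mul_cexp_neg_mul_Ioi ha 0
  | succ k ih =>
    rw [pow_succ', ← mul_assoc, mul_comm _ a, mul_integral_pow_mul_cexp_neg_mul_Ioi ha,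
      Nat.add_sub_cancel, zero_pow k.succ_ne_zero, add_zero, mul_assoc, ih]
    push_cast [Nat.factorial_succ]
    ring

end LaplaceMonomial

theorem integral_laguerre_mul_cexp_neg_mul_Ioi (n : ℕ) (c : ℝ) {s : ℂ} (hs : 0 < s.re) :
    ∫ t in Ioi (0 : ℝ), (laguerre n (c * t) : ℂ) * cexp (-(s * t)) =
      (s - c) ^ n / s ^ (n + 1) := by
  have hs0 : s ≠ 0 := fun h => by simp [h] at hs
  have hexpand : (fun t : ℝ => (laguerre n (c * t) : ℂ) * cexp (-(s * t))) = fun t : ℝ =>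
      ∑ k ∈ range (n + 1),
        (n.choose k * (-c) ^ k / k.factorial : ℂ) * ((t : ℂ) ^ k * cexp (-(s * t))) := by
    funext t
    rw [laguerre_eq_sum, ofReal_sum, sum_mul]
    refine sum_congr rfl fun k _ => ?_
    push_cast
    ring
  rw [hexpand,
    integral_finsetSum _ fun k _ => (integrableOn_pow_mul_cexp_neg_mul hs k).const_mul _,
    eq_div_iff (pow_ne_zero _ hs0), sub_eq_neg_add, add_pow, sum_mul]
  refine sum_congr rfl fun k hk => ?_
  rw [Finset.mem_range, Nat.lt_succ_iff] at hk
  have hkf : (k.factorial : ℂ) ≠ 0 := Nat.cast_ne_zero.mpr k.factorial_ne_zero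
  rw [integral_const_mul, integral_pow_mul_cexp_neg_mul_Ioi hs,
    show n + 1 = (k + 1) + (n - k) by omega, pow_add s (k + 1)]
  field_simp

theorem re_two_div_one_add_pos {z : ℂ} (hz : ‖z‖ < 1) : 0 < (2 / (1 + z)).re := by
  have hre : 0 < (1 + z).re := by
    have := (abs_re_le_norm z).trans_lt hz
    simp only [add_re, one_re]
    linarith [neg_abs_le z.re]
  have hnormSq : 0 < normSq (1 + z) := normSq_pos.mpr fun h => by simp [h] at hre
  simp only [div_re, re_ofNat, im_ofNat, zero_mul, zero_div, add_zero]
  positivity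

theorem cexp_neg_mul_cexp_div {z : ℂ} (hz : 1 + z ≠ 0) (t : ℝ) :
    cexp (-t) * cexp (t * (z - 1) / (z + 1)) = cexp (-(2 / (1 + z) * t)) := by
  have hz' : z + 1 ≠ 0 := by rwa [add_comm]
  rw [← exp_add]
  congr 1
  field_simp
  ring

theorem two_div_one_add_sub_two_pow_div_pow_succ {z : ℂ} (hz : 1 + z ≠ 0) (n : ℕ) :
    (2 / (1 + z) - 2) ^ n / (2 / (1 + z)) ^ (n + 1) = (-z) ^ n * (1 + z) / 2 := by
  rw [show 2 / (1 + z) - 2 = -z * (2 / (1 + z)) by field_simp; ring, mul_pow, pow_succ',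
    mul_div_mul_right _ _ (pow_ne_zero n (div_ne_zero two_ne_zero hz))]
  field_simp

theorem Hmap_laguerre (n : ℕ) :
    ∀ z ∈ Metric.ball (0 : ℂ) 1,
      Hmap (fun t => (((-1 : ℝ) ^ n * Real.sqrt 2 * Real.exp (-t) * laguerre n (2 * t) : ℝ) : ℂ))
        z = z ^ n := by
  intro z hz
  have hz1 : 1 + z ≠ 0 := fun h => by simp [eq_neg_of_add_eq_zero_right h] at hz
  have hintegrand : ∀ t : ℝ,
      (((-1 : ℝ) ^ n * Real.sqrt 2 * Real.exp (-t) * laguerre n (2 * t) : ℝ) : ℂ) *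
        cexp (t * (z - 1) / (z + 1)) =
      ((-1) ^ n * Real.sqrt 2) * ((laguerre n (2 * t) : ℂ) * cexp (-(2 / (1 + z) * t))) := by
    intro t
    push_cast
    rw [← cexp_neg_mul_cexp_div hz1]
    ring
  have hsqrt : ((Real.sqrt 2 : ℝ) : ℂ) ^ 2 = 2 := by
    rw [← ofReal_pow, Real.sq_sqrt zero_le_two, ofReal_ofNat]
  have hsign : (-1 : ℂ) ^ n * (-z) ^ n = z ^ n := by rw [← mul_pow, neg_one_mul, neg_neg]
  rw [Hmap, funext hintegrand, integral_const_mul, integral_laguerre_mul_cexp_neg_mul_Ioi n 2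
    (re_two_div_one_add_pos (mem_ball_zero_iff.mp hz)), ofReal_ofNat,
    two_div_one_add_sub_two_pow_div_pow_succ hz1]
  field_simp
  linear_combination (-1 : ℂ) ^ n * (-z) ^ n * hsqrt + 2 * hsign
end
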